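/- Let k₁, k₂, u₂, v₂ be real numbers with v₂ ≠ 0, k₁ ≠ 0, u₂ ≠ 0, and suppose the quadratic v₂·X² + (k₂ - k₁ - u₂·v₂)·X + k₁·u₂ has two distinct real roots. Then there exist points (U⁺, V⁺) and (U⁻, V⁻) with U⁺·V⁺ = k₁ and U⁻·V⁻ = k₁ such that (U⁺ - u₂)·(V⁺ - v₂) - k₂ > 0 and (U⁻ - u₂)·(V⁻ - v₂) - k₂ < 0. -/

import Mathlib

/-!
On the branch `V = k₁ / U` the quantity `(U - u₂) * (V - v₂) - k₂` equals `-q(U) / U`, where `q`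
is the given quadratic. At a root `r₂` (nonzero, since `q 0 = k₁ * u₂ ≠ 0`) it vanishes, and by
Vieta its derivative there is `v₂ * (r₁ - r₂) / r₂ ≠ 0`: the hyperbolas cross transversally. A
function with nonzero derivative at a point takes values on both sides of its value there, at
points arbitrarily close to it, in particular at points with `U ≠ 0`.
-/

open Filter Topology

theorem quadratic_coeffs_eq_of_roots {R : Type*} [CommRing R] [IsDomain R] {a b c r₁ r₂ : R}
    (hne : r₁ ≠ r₂) (h₁ : a * r₁ ^ 2 + b * r₁ + c = 0) (h₂ : a * r₂ ^ 2 + b * r₂ + c = 0) :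
    b = -a * (r₁ + r₂) ∧ c = a * r₁ * r₂ := by
  have hb : b = -a * (r₁ + r₂) := by
    have : (r₁ - r₂) * (a * (r₁ + r₂) + b) = 0 := by linear_combination h₁ - h₂
    linear_combination (mul_eq_zero.mp this).resolve_left (sub_ne_zero.mpr hne)
  exact ⟨hb, by linear_combination h₁ - r₁ * hb⟩

theorem HasDerivAt.frequently_lt_and_frequently_gt {f : ℝ → ℝ} {f' a : ℝ}
    (hf : HasDerivAt f f' a) (hf' : f' ≠ 0) :
    (∃ᶠ x in 𝓝 a, f a < f x) ∧ ∃ᶠ x in 𝓝 a, f x < f a := by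
  constructor
  · simpa [IsLocalMax, IsMaxFilter] using mt (IsLocalMax.hasDerivAt_eq_zero · hf) hf'
  · simpa [IsLocalMin, IsMinFilter] using mt (IsLocalMin.hasDerivAt_eq_zero · hf) hf'

theorem stmt_8 (k₁ k₂ u₂ v₂ : ℝ) (hv₂ : v₂ ≠ 0) (hk₁ : k₁ ≠ 0) (hu₂ : u₂ ≠ 0)
    (hroots : ∃ r₁ r₂ : ℝ, r₁ ≠ r₂ ∧
      v₂ * r₁ ^ 2 + (k₂ - k₁ - u₂ * v₂) * r₁ + k₁ * u₂ = 0 ∧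
      v₂ * r₂ ^ 2 + (k₂ - k₁ - u₂ * v₂) * r₂ + k₁ * u₂ = 0) :
    (∃ U V : ℝ, U * V = k₁ ∧ (U - u₂) * (V - v₂) - k₂ > 0) ∧
    (∃ U V : ℝ, U * V = k₁ ∧ (U - u₂) * (V - v₂) - k₂ < 0) := by
  obtain ⟨r₁, r₂, hne, h₁, h₂⟩ := hroots
  have hvieta : k₁ * u₂ = v₂ * r₁ * r₂ := (quadratic_coeffs_eq_of_roots hne h₁ h₂).2
  have hr₂ : r₂ ≠ 0 := by rintro rfl; simp_all
  set F : ℝ → ℝ := fun U => (U - u₂) * (k₁ / U - v₂) - k₂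
  have hF : F r₂ = 0 := by
    simp only [F]; field_simp; linear_combination -h₂
  have hF' : HasDerivAt F (v₂ * (r₁ - r₂) / r₂) r₂ := by
    have h := (((hasDerivAt_id r₂).sub_const u₂).mul
      (((hasDerivAt_inv hr₂).const_mul k₁).sub_const v₂)).sub_const k₂
    simp only [id, ← div_eq_mul_inv] at h
    refine h.congr_deriv ?_
    field_simp
    linear_combination hvieta
  have hF'ne : v₂ * (r₁ - r₂) / r₂ ≠ 0 := div_ne_zero (mul_ne_zero hv₂ (sub_ne_zero.mpr hne)) hr₂
  have hnear : ∀ᶠ U in 𝓝 r₂, U ≠ 0 := isOpen_ne.mem_nhds hr₂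
  obtain ⟨hpos, hneg⟩ := hF'.frequently_lt_and_frequently_gt hF'ne
  obtain ⟨U, hU, hU₀⟩ := (hpos.and_eventually hnear).exists
  obtain ⟨U', hU', hU'₀⟩ := (hneg.and_eventually hnear).exists
  rw [hF] at hU hU'
  exact ⟨⟨U, k₁ / U, mul_div_cancel₀ k₁ hU₀, hU⟩, ⟨U', k₁ / U', mul_div_cancel₀ k₁ hU'₀, hU'⟩⟩
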